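/- arXiv:2106.14098 — 3 statements merged into one kernel-verified Lean document; each statement's English description precedes it below -/
import Mathlib

section
/- For every real number s and every ε > 0 there exists a piecewise C¹ horizontal curve γ : [0,1] → 𝓗 with γ(0) = (0,0,0), γ(1) = (0,0,s), and sub-Riemannian length ℓ_g(γ) < ε. Consequently the sub-Riemannian geodesic distance satisfies ρ((0,0,0),(0,0,s)) = 0 for every s ∈ ℝ. -/
open scoped RealInnerProductSpace
open Real

noncomputable section

abbrev l2 : Type := lp (fun _ : ℕ => ℝ) 2

abbrev Hei : Type := l2 × l2 × ℝ

/-- The group operation of the infinite dimensional Heisenberg group. -/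
def hMul (p q : Hei) : Hei :=
  (p.1 + q.1, p.2.1 + q.2.1, p.2.2 + q.2.2 + ⟪p.1, q.2.1⟫ - ⟪p.2.1, q.1⟫)

/-- The square of the weak norm `‖u‖_η`. -/
def etaSq (u : l2) : ℝ := ∑' k : ℕ, (u k)^2 / ((k : ℝ) + 1)

/-- The square of the weak Riemannian norm `‖v‖_{σ,p}`. -/
def sigmaSq (p v : Hei) : ℝ :=
  etaSq v.1 + etaSq v.2.1 + (v.2.2 - ⟪p.1, v.2.1⟫ + ⟪p.2.1, v.1⟫)^2

def PiecewiseC1 (γ : ℝ → Hei) : Prop :=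
  ContinuousOn γ (Set.Icc 0 1) ∧
  ∃ S : Finset ℝ, ∀ t ∈ Set.Icc (0:ℝ) 1, t ∉ S →
    DifferentiableAt ℝ γ t ∧ ContinuousAt (deriv γ) t

def Horizontal (γ : ℝ → Hei) : Prop :=
  ∀ t ∈ Set.Icc (0:ℝ) 1, DifferentiableAt ℝ γ t →
    deriv (fun s => (γ s).2.2) t
      = ⟪(γ t).1, deriv (fun s => (γ s).2.1) t⟫
        - ⟪(γ t).2.1, deriv (fun s => (γ s).1) t⟫

def lenSigma (γ : ℝ → Hei) : ℝ :=
  ∫ t in (0:ℝ)..1, Real.sqrt (sigmaSq (γ t) (deriv γ t))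

def lenG (γ : ℝ → Hei) : ℝ :=
  ∫ t in (0:ℝ)..1,
    Real.sqrt (etaSq (deriv (fun s => (γ s).1) t) + etaSq (deriv (fun s => (γ s).2.1) t))

def dSigma (p q : Hei) : ℝ :=
  sInf {L | ∃ γ : ℝ → Hei, PiecewiseC1 γ ∧ γ 0 = p ∧ γ 1 = q ∧ lenSigma γ = L}

def rho (p q : Hei) : ℝ :=
  sInf {L | ∃ γ : ℝ → Hei, PiecewiseC1 γ ∧ Horizontal γ ∧ γ 0 = p ∧ γ 1 = q ∧ lenG γ = L}

def sigma0 (v w : Hei) : ℝ :=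
  (∑' k : ℕ, ((v.1 k) * (w.1 k) + (v.2.1 k) * (w.2.1 k)) / ((k : ℝ) + 1)) + v.2.2 * w.2.2

def bracket (X Y : Hei) : Hei := (0, 0, 2 * (⟪X.1, Y.2.1⟫ - ⟪X.2.1, Y.1⟫))

/-- `eVec n` is the `(n+1)`-th standard basis vector of `ℓ²`. -/
def eVec (n : ℕ) : l2 := lp.single 2 n 1

def e3 : Hei := (0, 0, 1)

/-!
The basis vector `eVec n` has `ℓ²` norm `1` but weak norm `‖eVec n‖_η = 1 / √(n + 1)`.
Horizontality only involves `ℓ²` inner products, so a planar loop `(x, y)` lifts along `eVec n`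
to the horizontal curve `(x • eVec n, y • eVec n, z)`, where `z' = x y' - y x'` and `z` ends at
twice the signed area of the loop, independently of `n`; its g-length is the Euclidean length of
the loop divided by `√(n + 1)`. An ellipse with semi-axes `s / (2π)` and `1` gives `z 1 = s`.
-/

lemma etaSq_smul_eVec (n : ℕ) (u : ℝ) : etaSq (u • eVec n) = u ^ 2 / ((n : ℝ) + 1) := by
  rw [etaSq, tsum_eq_single n]
  · simp [eVec]
  · intro k hk
    simp [eVec, hk]

lemma inner_eVec_self (n : ℕ) : ⟪eVec n, eVec n⟫ = 1 := by
  simp [eVec]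

lemma PiecewiseC1.of_contDiff {γ : ℝ → Hei} (hγ : ContDiff ℝ 1 γ) : PiecewiseC1 γ :=
  ⟨hγ.continuous.continuousOn, ∅, fun _ _ _ =>
    ⟨(hγ.differentiable one_ne_zero).differentiableAt, (hγ.continuous_deriv le_rfl).continuousAt⟩⟩

lemma lenG_nonneg (γ : ℝ → Hei) : 0 ≤ lenG γ :=
  intervalIntegral.integral_nonneg zero_le_one fun _ _ => Real.sqrt_nonneg _

def liftAlong (e : l2) (x y z : ℝ → ℝ) : ℝ → Hei := fun t => (x t • e, y t • e, z t)

section liftAlong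

variable {x y z : ℝ → ℝ}

lemma contDiff_liftAlong (e : l2) (hx : ContDiff ℝ 1 x) (hy : ContDiff ℝ 1 y)
    (hz : ContDiff ℝ 1 z) : ContDiff ℝ 1 (liftAlong e x y z) :=
  (hx.smul contDiff_const).prodMk ((hy.smul contDiff_const).prodMk hz)

lemma horizontal_liftAlong {e : l2} (he : ⟪e, e⟫ = 1) (hx : Differentiable ℝ x)
    (hy : Differentiable ℝ y)
    (hz : ∀ t, deriv z t = x t * deriv y t - y t * deriv x t) :
    Horizontal (liftAlong e x y z) := by
  intro t _ _
  simp only [liftAlong, deriv_smul_const (hx t), deriv_smul_const (hy t), real_inner_smul_left,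
    real_inner_smul_right, he, hz]
  ring

lemma lenG_liftAlong_eVec (n : ℕ) (hx : Differentiable ℝ x) (hy : Differentiable ℝ y) :
    lenG (liftAlong (eVec n) x y z) =
      (∫ t in (0 : ℝ)..1, √(deriv x t ^ 2 + deriv y t ^ 2)) / √((n : ℝ) + 1) := by
  rw [← intervalIntegral.integral_div]
  refine intervalIntegral.integral_congr fun t _ => ?_
  simp only [liftAlong, deriv_smul_const (hx t), deriv_smul_const (hy t), etaSq_smul_eVec,
    ← add_div, Real.sqrt_div' _ (by positivity : (0 : ℝ) ≤ (n : ℝ) + 1)]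

end liftAlong

lemma exists_div_sqrt_nat_lt (L : ℝ) {ε : ℝ} (hε : 0 < ε) : ∃ n : ℕ, L / √((n : ℝ) + 1) < ε := by
  have : Filter.Tendsto (fun n : ℕ => L / √((n : ℝ) + 1)) Filter.atTop (nhds 0) := by
    refine tendsto_const_nhds.div_atTop (Real.tendsto_sqrt_atTop.comp ?_)
    exact Filter.tendsto_atTop_add_const_right _ 1 tendsto_natCast_atTop_atTop
  exact (this.eventually (gt_mem_nhds hε)).exists

lemma deriv_ellipse_area (c t : ℝ) :
    deriv (fun t => c * (2 * π * t - sin (2 * π * t))) t =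
      c * sin (2 * π * t) * deriv (fun t => 1 - cos (2 * π * t)) t
        - (1 - cos (2 * π * t)) * deriv (fun t => c * sin (2 * π * t)) t := by
  have hlin : HasDerivAt (fun t => 2 * π * t) (2 * π) t := by
    simpa using (hasDerivAt_id t).const_mul (2 * π)
  have hz : HasDerivAt (fun t => c * (2 * π * t - sin (2 * π * t)))
      (c * (2 * π - cos (2 * π * t) * (2 * π))) t := (hlin.sub hlin.sin).const_mul c
  have hy : HasDerivAt (fun t => 1 - cos (2 * π * t)) (0 - -sin (2 * π * t) * (2 * π)) t :=
    (hasDerivAt_const t 1).sub hlin.cos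
  have hx : HasDerivAt (fun t => c * sin (2 * π * t)) (c * (cos (2 * π * t) * (2 * π))) t :=
    hlin.sin.const_mul c
  rw [hz.deriv, hy.deriv, hx.deriv]
  linear_combination (-2 * π * c) * sin_sq_add_cos_sq (2 * π * t)

lemma exists_horizontal_curve_lenG_lt (s : ℝ) {ε : ℝ} (hε : 0 < ε) :
    ∃ γ : ℝ → Hei, PiecewiseC1 γ ∧ Horizontal γ ∧
      γ 0 = ((0, 0, 0) : Hei) ∧ γ 1 = ((0, 0, s) : Hei) ∧ lenG γ < ε := by
  set c := s / (2 * π)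
  set x : ℝ → ℝ := fun t => c * sin (2 * π * t)
  set y : ℝ → ℝ := fun t => 1 - cos (2 * π * t)
  set z : ℝ → ℝ := fun t => c * (2 * π * t - sin (2 * π * t))
  have hx : ContDiff ℝ 1 x := by fun_prop
  have hy : ContDiff ℝ 1 y := by fun_prop
  have hz : ContDiff ℝ 1 z := by fun_prop
  obtain ⟨n, hn⟩ :=
    exists_div_sqrt_nat_lt (∫ t in (0 : ℝ)..1, √(deriv x t ^ 2 + deriv y t ^ 2)) hε
  refine ⟨liftAlong (eVec n) x y z, .of_contDiff (contDiff_liftAlong _ hx hy hz),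
    horizontal_liftAlong (inner_eVec_self n) (hx.differentiable one_ne_zero)
      (hy.differentiable one_ne_zero) (deriv_ellipse_area c), ?_, ?_, ?_⟩
  · simp [liftAlong, x, y, z]
  · simp [liftAlong, x, y, z, c]
  · rwa [lenG_liftAlong_eVec n (hx.differentiable one_ne_zero) (hy.differentiable one_ne_zero)]

lemma rho_eq_zero_of_forall_exists_lenG_lt {p q : Hei}
    (h : ∀ ε > 0, ∃ γ : ℝ → Hei, PiecewiseC1 γ ∧ Horizontal γ ∧ γ 0 = p ∧ γ 1 = q ∧ lenG γ < ε) :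
    rho p q = 0 := by
  have hnonneg : ∀ L ∈ {L | ∃ γ : ℝ → Hei, PiecewiseC1 γ ∧ Horizontal γ ∧ γ 0 = p ∧ γ 1 = q ∧
      lenG γ = L}, 0 ≤ L := by
    rintro _ ⟨γ, -, -, -, -, rfl⟩
    exact lenG_nonneg γ
  refine le_antisymm (le_of_forall_pos_lt_add fun ε hε => ?_) (Real.sInf_nonneg hnonneg)
  obtain ⟨γ, hC1, hhor, h0, h1, hlen⟩ := h ε hε
  exact (csInf_le ⟨0, hnonneg⟩ ⟨γ, hC1, hhor, h0, h1, rfl⟩).trans_lt (by simpa using hlen)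

/-- For every real `s` and `ε > 0` there is a piecewise `C¹` horizontal curve from the
origin to `(0,0,s)` of sub-Riemannian length less than `ε`; hence `ρ((0,0,0),(0,0,s)) = 0`. -/
theorem statement1 :
    (∀ s : ℝ, ∀ ε > 0, ∃ γ : ℝ → Hei, PiecewiseC1 γ ∧ Horizontal γ ∧
      γ 0 = ((0, 0, 0) : Hei) ∧ γ 1 = ((0, 0, s) : Hei) ∧ lenG γ < ε) ∧
    (∀ s : ℝ, rho ((0, 0, 0) : Hei) ((0, 0, s) : Hei) = 0) :=
  ⟨fun s _ hε => exists_horizontal_curve_lenG_lt s hε,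
    fun s => rho_eq_zero_of_forall_exists_lenG_lt fun _ hε => exists_horizontal_curve_lenG_lt s hε⟩

end
end

section
/- Let W = (Σ_{j≥1} e_j/j, 0, 0) ∈ ℓ²×ℓ²×ℝ, i.e. W¹_j = 1/j for all j and W² = 0, W³ = 0. Then the adjoint B_σ(e³,W) = ad(W)*(e³) with respect to σ₀ does not exist: there is no element B ∈ ℓ²×ℓ²×ℝ satisfying σ₀([W,Z], e³) = σ₀(Z, B) for all Z ∈ ℓ²×ℓ²×ℝ. Consequently the Arnold sectional curvature K_σ(e³, W) cannot be defined. -/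
open scoped RealInnerProductSpace
open Real

noncomputable section

theorem Memℓp.eq_zero_of_const {ι E : Type*} [Infinite ι] [NormedAddCommGroup E]
    {p : ENNReal} (hp : 0 < p.toReal) {c : E} (hc : Memℓp (fun _ : ι => c) p) : c = 0 := by
  have hpow : ‖c‖ ^ p.toReal = 0 := (summable_const_iff _).1 (hc.summable hp)
  simpa [Real.rpow_eq_zero (norm_nonneg c) hp.ne'] using hpow

theorem inner_eVec_right (u : l2) (n : ℕ) : ⟪u, eVec n⟫ = u n := by
  simp [eVec, lp.inner_single_right]

theorem sigma0_bracket_e3 (X Z : Hei) :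
    sigma0 (bracket X Z) e3 = 2 * (⟪X.1, Z.2.1⟫ - ⟪X.2.1, Z.1⟫) := by
  simp [sigma0, bracket, e3]

theorem sigma0_eVec_snd (n : ℕ) (B : Hei) :
    sigma0 (0, eVec n, 0) B = B.2.1 n / ((n : ℝ) + 1) := by
  have hterm : ∀ k, (0 * B.1 k + eVec n k * B.2.1 k) / ((k : ℝ) + 1)
      = if k = n then B.2.1 n / ((n : ℝ) + 1) else 0 := by
    intro k
    split_ifs with hk
    · subst hk; simp [eVec]
    · simp [eVec, Pi.single_eq_of_ne hk]
  simp only [sigma0, lp.coeFn_zero, Pi.zero_apply]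
  rw [tsum_congr hterm, tsum_ite_eq]
  ring

/-- Testing against `Z = (0, eVec n, 0)` shows that `ad(X)*(e³)` can exist only if
`((n + 1) X¹ₙ)ₙ ∈ ℓ²`; for `W` this sequence is constant. -/
theorem adjoint_e3_snd_apply {X B : Hei}
    (hB : ∀ Z : Hei, sigma0 (bracket X Z) e3 = sigma0 Z B) (n : ℕ) :
    B.2.1 n = 2 * ((n : ℝ) + 1) * X.1 n := by
  have h := hB (0, eVec n, 0)
  rw [sigma0_bracket_e3, sigma0_eVec_snd, inner_eVec_right, inner_zero_right] at h
  field_simp at h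
  linarith

theorem statement16_general (W : Hei)
    (hW1 : ∀ j : ℕ, W.1 j = 1 / ((j : ℝ) + 1)) :
    ¬ ∃ B : Hei, ∀ Z : Hei, sigma0 (bracket W Z) e3 = sigma0 Z B := by
  rintro ⟨B, hB⟩
  have hconst : (B.2.1 : ℕ → ℝ) = fun _ => 2 := by
    funext n
    rw [adjoint_e3_snd_apply hB, hW1]
    field_simp
  have hmem : Memℓp (fun _ : ℕ => (2 : ℝ)) 2 := hconst ▸ lp.memℓp B.2.1
  exact two_ne_zero (hmem.eq_zero_of_const (by norm_num))

/-- For `W = (Σ_j e_j/j, 0, 0)` the adjoint `B_σ(e³,W) = ad(W)*(e³)` does not exist. -/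
theorem statement16 (W : Hei)
    (hW1 : ∀ j : ℕ, W.1 j = 1 / ((j : ℝ) + 1))
    (hW2 : W.2.1 = 0) (hW3 : W.2.2 = 0) :
    ¬ ∃ B : Hei, ∀ Z : Hei, sigma0 (bracket W Z) e3 = sigma0 Z B :=
  statement16_general W hW1

end
end

section
/- Fix an integer j ≥ 1 and let a_{1j} = √j (e_j, 0, 0) and a_{2j} = √j (0, e_j, 0), which are σ₀-orthonormal. Then: (i) their Lie bracket is [a_{1j}, a_{2j}] = 2j e³ = (0,0,2j), and σ₀([a_{1j},a_{2j}],[a_{1j},a_{2j}]) = 4j²; (ii) σ₀([a_{2j},Z], a_{1j}) = 0 and σ₀([a_{1j},Z], a_{2j}) = 0 for all Z, i.e. B_σ(a_{1j},a_{2j}) = B_σ(a_{2j},a_{1j}) = 0; (iii) therefore Arnold's sectional curvature of the plane spanned by a_{1j} and a_{2j} equals K_σ(a_{1j}, a_{2j}) = −(3/4)σ₀([a_{1j},a_{2j}],[a_{1j},a_{2j}]) = −3j², so that K_σ(a_{1j}, a_{2j}) → −∞ as j → ∞. -/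
open scoped RealInnerProductSpace
open Real

noncomputable section

/-- `a₁ⱼ = √j e¹_j`. -/
def a1 (j : ℕ) : Hei := Real.sqrt j • ((eVec (j - 1), 0, 0) : Hei)

/-- `a₂ⱼ = √j e²_j`. -/
def a2 (j : ℕ) : Hei := Real.sqrt j • ((0, eVec (j - 1), 0) : Hei)

lemma eVec_apply (n k : ℕ) : eVec n k = if k = n then 1 else 0 := by
  simp [eVec, lp.single_apply, Pi.single_apply]

lemma inner_eVec_left (n : ℕ) (f : l2) : ⟪eVec n, f⟫ = f n := by
  simp [eVec, lp.inner_single_left]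

lemma a1_eq (j : ℕ) : a1 j = (Real.sqrt j • eVec (j - 1), 0, 0) := by
  simp [a1]

lemma a2_eq (j : ℕ) : a2 j = (0, Real.sqrt j • eVec (j - 1), 0) := by
  simp [a2]

lemma tsum_smul_eVec_mul_self_div (c : ℝ) (n : ℕ) :
    ∑' k : ℕ, (c • eVec n) k * (c • eVec n) k / ((k : ℝ) + 1) =
      c ^ 2 / ((n : ℝ) + 1) := by
  rw [tsum_eq_single n fun k hk => by simp [eVec_apply, hk]]
  simp [eVec_apply, sq]

lemma sigma0_fst_fst (u v : l2) :
    sigma0 (u, 0, 0) (v, 0, 0) = ∑' k : ℕ, u k * v k / ((k : ℝ) + 1) := by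
  simp [sigma0]

lemma sigma0_snd_snd (u v : l2) :
    sigma0 (0, u, 0) (0, v, 0) = ∑' k : ℕ, u k * v k / ((k : ℝ) + 1) := by
  simp [sigma0]

lemma sigma0_fst_snd (u v : l2) : sigma0 (u, 0, 0) (0, v, 0) = 0 := by
  simp [sigma0]

lemma bracket_fst_snd (u v : l2) : bracket (u, 0, 0) (0, v, 0) = (0, 0, 2 * ⟪u, v⟫) := by
  simp [bracket]

lemma sigma0_bracket_left (X Z W : Hei) :
    sigma0 (bracket X Z) W = (bracket X Z).2.2 * W.2.2 := by
  simp [sigma0, bracket]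

lemma sigma0_center (s t : ℝ) : sigma0 ((0, 0, s) : Hei) (0, 0, t) = s * t := by
  simp [sigma0]

lemma sq_sqrt_div_natCast_pred_add_one {j : ℕ} (hj : 1 ≤ j) :
    Real.sqrt j ^ 2 / (((j - 1 : ℕ) : ℝ) + 1) = 1 := by
  have hj' : (0 : ℝ) < j := by exact_mod_cast hj
  rw [sq_sqrt hj'.le, Nat.cast_pred hj, sub_add_cancel, div_self hj'.ne']

lemma sigma0_a1_self {j : ℕ} (hj : 1 ≤ j) : sigma0 (a1 j) (a1 j) = 1 := by
  rw [a1_eq, sigma0_fst_fst, tsum_smul_eVec_mul_self_div, sq_sqrt_div_natCast_pred_add_one hj]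

lemma sigma0_a2_self {j : ℕ} (hj : 1 ≤ j) : sigma0 (a2 j) (a2 j) = 1 := by
  rw [a2_eq, sigma0_snd_snd, tsum_smul_eVec_mul_self_div, sq_sqrt_div_natCast_pred_add_one hj]

lemma sigma0_a1_a2 (j : ℕ) : sigma0 (a1 j) (a2 j) = 0 := by
  rw [a1_eq, a2_eq, sigma0_fst_snd]

lemma bracket_a1_a2 (j : ℕ) : bracket (a1 j) (a2 j) = ((0, 0, 2 * (j : ℝ)) : Hei) := by
  rw [a1_eq, a2_eq, bracket_fst_snd, real_inner_smul_left, real_inner_smul_right,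
    inner_eVec_left, eVec_apply, if_pos rfl, mul_one, mul_self_sqrt (Nat.cast_nonneg j)]

lemma sigma0_bracket_a1 (j : ℕ) (X Z : Hei) : sigma0 (bracket X Z) (a1 j) = 0 := by
  rw [sigma0_bracket_left, a1_eq, mul_zero]

lemma sigma0_bracket_a2 (j : ℕ) (X Z : Hei) : sigma0 (bracket X Z) (a2 j) = 0 := by
  rw [sigma0_bracket_left, a2_eq, mul_zero]

/-- `a₁ⱼ, a₂ⱼ` are `σ₀`-orthonormal, `[a₁ⱼ,a₂ⱼ] = 2j e³` with
`σ₀([a₁ⱼ,a₂ⱼ],[a₁ⱼ,a₂ⱼ]) = 4j²`, the adjoints `B_σ(a₁ⱼ,a₂ⱼ)` and `B_σ(a₂ⱼ,a₁ⱼ)`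
vanish, and `K_σ(a₁ⱼ,a₂ⱼ) = −(3/4)σ₀([a₁ⱼ,a₂ⱼ],[a₁ⱼ,a₂ⱼ]) = −3j² → −∞`. -/
theorem statement19 (j : ℕ) (hj : 1 ≤ j) :
    sigma0 (a1 j) (a1 j) = 1 ∧ sigma0 (a2 j) (a2 j) = 1 ∧ sigma0 (a1 j) (a2 j) = 0 ∧
    bracket (a1 j) (a2 j) = ((0, 0, 2 * (j : ℝ)) : Hei) ∧
    sigma0 (bracket (a1 j) (a2 j)) (bracket (a1 j) (a2 j)) = 4 * (j : ℝ)^2 ∧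
    (∀ Z : Hei, sigma0 (bracket (a2 j) Z) (a1 j) = 0) ∧
    (∀ Z : Hei, sigma0 (bracket (a1 j) Z) (a2 j) = 0) ∧
    -(3/4) * sigma0 (bracket (a1 j) (a2 j)) (bracket (a1 j) (a2 j)) = -3 * (j : ℝ)^2 ∧
    Filter.Tendsto (fun m : ℕ => -3 * (m : ℝ)^2) Filter.atTop Filter.atBot := by
  have hbb : sigma0 (bracket (a1 j) (a2 j)) (bracket (a1 j) (a2 j)) = 4 * (j : ℝ) ^ 2 := by
    rw [bracket_a1_a2, sigma0_center]
    ring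
  refine ⟨sigma0_a1_self hj, sigma0_a2_self hj, sigma0_a1_a2 j, bracket_a1_a2 j, hbb,
    sigma0_bracket_a1 j (a2 j), sigma0_bracket_a2 j (a1 j), by rw [hbb]; ring, ?_⟩
  exact ((Filter.tendsto_pow_atTop two_ne_zero).comp
    tendsto_natCast_atTop_atTop).const_mul_atTop_of_neg (by norm_num)

end
end
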